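/- Let x = (x₁, x₂, x₃, x₄, x₅) ∈ ℝ⁵ satisfy x₅ ≥ max{0, −2x₃, 2x₄} and x₁² + x₂² = x₅(x₅ + 2x₃)(x₅ − 2x₄), and suppose that the Euclidean norm of (x₁, x₂, x₃, x₄) in ℝ⁴ is strictly less than 1. Then the Euclidean norm of x in ℝ⁵ satisfies ‖x‖ ≤ 4 (x₁² + x₂² + x₃² + x₄²)^{1/3}. -/
import Mathlib
set_option maxHeartbeats 1000000


/-- If `x = (x₁,…,x₅)` satisfies `x₅ ≥ max {0, −2x₃, 2x₄}`,
`x₁² + x₂² = x₅ (x₅ + 2x₃)(x₅ − 2x₄)`, and the Euclidean norm of `(x₁,x₂,x₃,x₄)`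
is less than `1`, then the Euclidean norm of `x` is at most
`4 (x₁² + x₂² + x₃² + x₄²)^{1/3}`. -/
theorem norm_bound_of_graph (x₁ x₂ x₃ x₄ x₅ : ℝ)
    (h : max 0 (max (-2 * x₃) (2 * x₄)) ≤ x₅)
    (heq : x₁ ^ 2 + x₂ ^ 2 = x₅ * (x₅ + 2 * x₃) * (x₅ - 2 * x₄))
    (hsmall : Real.sqrt (x₁ ^ 2 + x₂ ^ 2 + x₃ ^ 2 + x₄ ^ 2) < 1) :
    Real.sqrt (x₁ ^ 2 + x₂ ^ 2 + x₃ ^ 2 + x₄ ^ 2 + x₅ ^ 2) ≤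
      4 * (x₁ ^ 2 + x₂ ^ 2 + x₃ ^ 2 + x₄ ^ 2) ^ ((1 : ℝ) / 3) := by
  set s := x₁ ^ 2 + x₂ ^ 2 + x₃ ^ 2 + x₄ ^ 2 with hs
  have hs0 : (0:ℝ) ≤ s := by positivity
  have hs1 : s < 1 := by
    nlinarith [Real.sq_sqrt hs0, Real.sqrt_nonneg s]
  set t := s ^ ((1:ℝ)/3) with ht
  have ht0 : 0 ≤ t := Real.rpow_nonneg hs0 _
  have htc : t ^ 3 = s := by
    rw [ht, ← Real.rpow_natCast (s ^ ((1:ℝ)/3)) 3, ← Real.rpow_mul hs0]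
    norm_num
  have ht1 : t ≤ 1 := Real.rpow_le_one hs0 hs1.le (by norm_num)
  have h0 : 0 ≤ x₅ := le_trans (le_max_left _ _) h
  have ha : 0 ≤ x₅ + 2 * x₃ := by
    have := le_trans (le_trans (le_max_left _ _) (le_max_right (0:ℝ) _)) h
    linarith
  have hb : 0 ≤ x₅ - 2 * x₄ := by
    have := le_trans (le_trans (le_max_right _ _) (le_max_right (0:ℝ) _)) h
    linarith
  -- key bound : x₅ ≤ (10/3) t
  have hts : s ≤ t ^ 2 := by nlinarith
  have h5 : x₅ ≤ 10/3 * t := by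
    by_cases hca : 2/5 * x₅ ≤ x₅ + 2 * x₃
    · by_cases hcb : 2/5 * x₅ ≤ x₅ - 2 * x₄
      · -- (4/25) x₅³ ≤ s = t³
        have hq : 0 ≤ 2/5 * x₅ := by linarith
        have hA : (2/5 * x₅) * (2/5 * x₅) ≤ (x₅ + 2 * x₃) * (x₅ - 2 * x₄) :=
          mul_le_mul hca hcb hq ha
        have hB : x₅ * ((2/5 * x₅) * (2/5 * x₅)) ≤ x₅ * ((x₅ + 2 * x₃) * (x₅ - 2 * x₄)) :=
          mul_le_mul_of_nonneg_left hA h0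
        have h2 : x₅ * (x₅ + 2 * x₃) * (x₅ - 2 * x₄) ≤ s := by
          rw [← heq]; nlinarith [sq_nonneg x₃, sq_nonneg x₄]
        have hcube : 4/25 * x₅ ^ 3 ≤ t ^ 3 := by nlinarith
        by_contra h'
        push_neg at h'
        have : (10/3 * t) ^ 3 < x₅ ^ 3 := by
          apply pow_lt_pow_left₀ h' (by positivity) (by norm_num)
        nlinarith [pow_nonneg ht0 3]
      · push_neg at hcb
        have hx4 : x₄ ^ 2 ≤ t ^ 2 := by nlinarith [sq_nonneg x₁, sq_nonneg x₂, sq_nonneg x₃]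
        have : x₄ ≤ t := by nlinarith [sq_nonneg (x₄ - t)]
        linarith
    · push_neg at hca
      have hx3 : x₃ ^ 2 ≤ t ^ 2 := by nlinarith [sq_nonneg x₁, sq_nonneg x₂, sq_nonneg x₄]
      have : -x₃ ≤ t := by nlinarith [sq_nonneg (x₃ + t)]
      linarith
  have key : s + x₅ ^ 2 ≤ (4 * t) ^ 2 := by nlinarith
  calc Real.sqrt (s + x₅ ^ 2) ≤ Real.sqrt ((4 * t) ^ 2) := Real.sqrt_le_sqrt key
    _ = 4 * t := Real.sqrt_sq (by positivity)
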